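/- The theory SAPP is ω-categorical: any two countable models of SAPP are isomorphic. -/
import Mathlib


open FirstOrder Language Structure BoundedFormula

/-- The relation symbols of the language `L`: a single binary relation `O`. -/
inductive PerpRel : ℕ → Type
  | o : PerpRel 2

/-- The first-order language with a single binary relation symbol `O`. -/
def L : Language := ⟨fun _ => Empty, PerpRel⟩
  deriving IsRelational

/-- The binary relation symbol `O` of `L`. -/
abbrev oSym : L.Relations 2 := .o

/-- `O(xᵢ, xⱼ)` as a bounded formula. -/
def oBF {n : ℕ} (i j : Fin n) : L.BoundedFormula Empty n :=
  oSym.boundedFormula₂ (&i) (&j)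

/-- Finite conjunction of a list of bounded formulas. -/
def andAll {n : ℕ} : List (L.BoundedFormula Empty n) → L.BoundedFormula Empty n
  | [] => ⊤
  | φ :: l => φ ⊓ andAll l

/-- λ₁ₙ : ∀y₁…∀yₙ∀s(O(s,y₁) ∧ … ∧ O(s,yₙ) → ∃t(t ≠ y₁ ∧ … ∧ t ≠ yₙ ∧ O(s,t))).
Variables: y₁,…,yₙ are de Bruijn indices 0,…,n-1, s is index n, t is index n+1. -/
def lam1 (n : ℕ) : L.Sentence :=
  ((andAll ((List.finRange n).map fun i => oBF (Fin.last n) i.castSucc)).imp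
    ((andAll ((List.finRange n).map fun i =>
        ∼((&(Fin.last (n + 1))) =' (&(i.castSucc.castSucc)))) ⊓
      oBF ((Fin.last n).castSucc) (Fin.last (n + 1))).ex)).alls

/-- λ₂ₙ : ∀y₁…∀yₙ∃s(¬O(s,y₁) ∧ … ∧ ¬O(s,yₙ)).
Variables: y₁,…,yₙ are de Bruijn indices 0,…,n-1, s is index n. -/
def lam2 (n : ℕ) : L.Sentence :=
  ((andAll ((List.finRange n).map fun i => ∼(oBF (Fin.last n) i.castSucc))).ex).alls

/-- λ₃ : ∀x ¬O(x,x). -/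
def lam3 : L.Sentence := (∼(oBF (0 : Fin 1) 0)).alls

/-- λ₄ : ∀x∀y(O(x,y) → O(y,x)). -/
def lam4 : L.Sentence := ((oBF (0 : Fin 2) 1).imp (oBF (1 : Fin 2) 0)).alls

/-- λ₅ : ∀x∃y O(x,y). -/
def lam5 : L.Sentence := ((oBF (0 : Fin 2) 1).ex).alls

/-- λ₆ : ∀x∀y∀z∀t(O(x,z) ∧ O(y,z) ∧ O(x,t) → O(y,t)). -/
def lam6 : L.Sentence :=
  ((oBF (0 : Fin 4) 2 ⊓ oBF (1 : Fin 4) 2 ⊓ oBF (0 : Fin 4) 3).imp (oBF (1 : Fin 4) 3)).alls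

/-- The theory SAPP. -/
def SAPP : L.Theory :=
  {φ | ∃ n, 1 ≤ n ∧ φ = lam1 n} ∪ {φ | ∃ n, 2 ≤ n ∧ φ = lam2 n} ∪ {lam3, lam4, lam5, lam6}

section Facts
variable {M : Type*} [L.Structure M]

def oo (x y : M) : Prop := RelMap oSym ![x, y]

lemma realize_oBF {n : ℕ} (i j : Fin n) (v : Empty → M) (xs : Fin n → M) :
    (oBF i j).Realize v xs ↔ oo (xs i) (xs j) := by
  rw [oBF, realize_rel₂]
  simp only [Function.comp_apply, Term.realize_var, Sum.elim_inr, oo]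

lemma realize_andAll {n : ℕ} (l : List (L.BoundedFormula Empty n)) (v : Empty → M)
    (xs : Fin n → M) :
    (andAll l).Realize v xs ↔ ∀ φ ∈ l, φ.Realize v xs := by
  induction l with
  | nil => rw [andAll]; simp
  | cons φ l ih => rw [andAll]; simp [ih]

variable (hM : M ⊨ SAPP)
include hM

lemma oo_irrefl (x : M) : ¬ oo x x := by
  have h := hM.realize_of_mem lam3 (by right; simp)
  simp only [lam3, Sentence.Realize, realize_alls, realize_not] at h
  have h2 := h ![x]
  rw [realize_oBF] at h2
  exact h2

lemma oo_symm {x y : M} (h : oo x y) : oo y x := by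
  have h4 := hM.realize_of_mem lam4 (by right; simp)
  simp only [lam4, Sentence.Realize, realize_alls, realize_imp] at h4
  have h2 := h4 ![x, y]
  rw [realize_oBF, realize_oBF] at h2
  exact h2 h

lemma oo_serial (x : M) : ∃ y, oo x y := by
  have h5 := hM.realize_of_mem lam5 (by right; simp)
  simp only [lam5, Sentence.Realize, realize_alls, realize_ex] at h5
  obtain ⟨a, ha⟩ := h5 ![x]
  rw [realize_oBF] at ha
  refine ⟨a, ?_⟩
  simpa [Fin.snoc] using ha

lemma oo_six {x y z t : M} (h1 : oo x z) (h2 : oo y z) (h3 : oo x t) : oo y t := by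
  have h6 := hM.realize_of_mem lam6 (by right; simp)
  simp only [lam6, Sentence.Realize, realize_alls, realize_imp, realize_inf] at h6
  have h := h6 ![x, y, z, t]
  simp only [realize_oBF] at h
  exact h ⟨⟨h1, h2⟩, h3⟩

lemma oo_extend {n : ℕ} (hn : 1 ≤ n) (ys : Fin n → M) (s : M) (h : ∀ i, oo s (ys i)) :
    ∃ t, (∀ i, t ≠ ys i) ∧ oo s t := by
  have h1 := hM.realize_of_mem (lam1 n) (by left; left; exact ⟨n, hn, rfl⟩)
  simp only [lam1, Sentence.Realize, realize_alls, realize_imp, realize_ex, realize_inf,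
    realize_andAll, List.mem_map, List.mem_finRange, realize_not, realize_bdEqual,
    Term.realize_var, Sum.elim_inr, realize_oBF, forall_exists_index] at h1
  have h2 := h1 (Fin.snoc ys s)
  simp only [Fin.snoc_last, Fin.snoc_castSucc] at h2
  obtain ⟨t, ht1, ht2⟩ := h2 (fun φ i hi => by
    obtain ⟨-, rfl⟩ := hi
    rw [realize_oBF]
    simpa using h i)
  refine ⟨t, fun i => ?_, ?_⟩
  · have := ht1 _ i ⟨trivial, rfl⟩
    simp only [realize_not, realize_bdEqual, Term.realize_var, Function.comp_apply,
      Sum.elim_inr] at this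
    simpa only [Fin.snoc_castSucc, Fin.snoc_last] using this
  · simpa only [Fin.snoc_castSucc, Fin.snoc_last] using ht2

lemma oo_avoid {n : ℕ} (hn : 2 ≤ n) (ys : Fin n → M) : ∃ s, ∀ i, ¬ oo s (ys i) := by
  have h1 := hM.realize_of_mem (lam2 n) (by left; right; exact ⟨n, hn, rfl⟩)
  simp only [lam2, Sentence.Realize, realize_alls, realize_ex, realize_andAll, List.mem_map,
    List.mem_finRange, realize_not, realize_oBF, forall_exists_index] at h1
  obtain ⟨s, hs⟩ := h1 ys
  refine ⟨s, fun i => ?_⟩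
  have := hs _ i ⟨trivial, rfl⟩
  rw [realize_not, realize_oBF] at this
  simpa [Fin.snoc] using this

end Facts

section Derived
variable {M : Type*} [L.Structure M] (hM : M ⊨ SAPP)
include hM

lemma oo_extend' (s : M) (A : Finset M) (hA : ∀ y ∈ A, oo s y) : ∃ t, t ∉ A ∧ oo s t := by
  rcases A.eq_empty_or_nonempty with rfl | hne
  · obtain ⟨t, ht⟩ := oo_serial hM s
    exact ⟨t, by simp, ht⟩
  · have hcard : 1 ≤ A.card := Finset.card_pos.2 hne
    set e := A.equivFin with he
    obtain ⟨t, ht1, ht2⟩ := oo_extend hM (n := A.card) hcard (fun i => (e.symm i : M)) s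
      (fun i => hA _ (e.symm i).2)
    refine ⟨t, fun htA => ?_, ht2⟩
    have := ht1 (e ⟨t, htA⟩)
    simp at this

lemma nbhd_infinite (s : M) : {y : M | oo s y}.Infinite := fun hfin => by
  obtain ⟨t, htA, hts⟩ := oo_extend' hM s hfin.toFinset (fun y hy => by
    simpa using hy)
  exact htA (by simpa using hts)

lemma oo_avoid' [Nonempty M] (A : Finset M) : ∃ s : M, ∀ y ∈ A, ¬ oo s y := by
  classical
  set e := A.equivFin with he
  obtain ⟨s, hs⟩ := oo_avoid hM (n := A.card + 2) (by omega)
    (fun i => if h : (i : ℕ) < A.card then (e.symm ⟨i, h⟩ : M) else Classical.arbitrary M)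
  refine ⟨s, fun y hy => ?_⟩
  have hlt : ((e ⟨y, hy⟩ : Fin A.card) : ℕ) < A.card + 2 :=
    lt_of_lt_of_le (e ⟨y, hy⟩).isLt (by omega)
  have h2 := hs ⟨(e ⟨y, hy⟩ : Fin A.card), hlt⟩
  simpa using h2

end Derived

section Build
variable {M : Type*} [L.Structure M]

def sE (M : Type*) [L.Structure M] : Setoid M :=
  ⟨fun x y => ∀ z, oo x z ↔ oo y z,
    ⟨fun _ _ => Iff.rfl, fun h z => (h z).symm, fun h1 h2 z => (h1 z).trans (h2 z)⟩⟩

abbrev Qc (M : Type*) [L.Structure M] := Quotient (sE M)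

def qk (x : M) : Qc M := Quotient.mk (sE M) x

lemma rE_of_common (hM : M ⊨ SAPP) {x y z : M} (h1 : oo x z) (h2 : oo y z) : (sE M).r x y :=
  fun t => ⟨fun h3 => oo_six hM h1 h2 h3, fun h3 => oo_six hM h2 h1 h3⟩

lemma rE_of_common' (hM : M ⊨ SAPP) {x a b : M} (h1 : oo x a) (h2 : oo x b) : (sE M).r a b :=
  rE_of_common hM (oo_symm hM h1) (oo_symm hM h2)

noncomputable def nb (hM : M ⊨ SAPP) (x : M) : M := (oo_serial hM x).choose

lemma nb_oo (hM : M ⊨ SAPP) (x : M) : oo x (nb hM x) := (oo_serial hM x).choose_spec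

noncomputable def pI (hM : M ⊨ SAPP) : Qc M → Qc M :=
  Quotient.lift (fun x => qk (nb hM x)) (by
    intro x y hxy
    apply Quotient.sound
    exact rE_of_common' hM (nb_oo hM x) ((hxy _).mpr (nb_oo hM y)))

lemma pI_mk (hM : M ⊨ SAPP) (x : M) : pI hM (qk x) = qk (nb hM x) := rfl

lemma oo_iff_p (hM : M ⊨ SAPP) {x y : M} : oo x y ↔ pI hM (qk x) = qk y := by
  constructor
  · intro h
    apply Quotient.sound
    exact rE_of_common' hM (nb_oo hM x) h
  · intro h
    have h2 : (sE M).r (nb hM x) y := Quotient.exact h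
    exact oo_symm hM ((h2 x).mp (oo_symm hM (nb_oo hM x)))

lemma pI_invol (hM : M ⊨ SAPP) (q : Qc M) : pI hM (pI hM q) = q := by
  induction q using Quotient.inductionOn with
  | h x => exact (oo_iff_p hM).mp (oo_symm hM (nb_oo hM x))

lemma pI_ne (hM : M ⊨ SAPP) (q : Qc M) : pI hM q ≠ q := by
  induction q using Quotient.inductionOn with
  | h x =>
    intro h
    have hr : (sE M).r (nb hM x) x := Quotient.exact h
    exact oo_irrefl hM x ((hr x).mp (oo_symm hM (nb_oo hM x)))

lemma fiber_infinite (hM : M ⊨ SAPP) (q : Qc M) : Infinite {x : M // qk x = q} := by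
  obtain ⟨x, rfl⟩ : ∃ x, qk x = q := Quotient.exists_rep q
  have hinf : Infinite {y : M // oo (nb hM x) y} :=
    Set.infinite_coe_iff.mpr (nbhd_infinite hM (nb hM x))
  exact Infinite.of_injective
    (fun y : {y : M // oo (nb hM x) y} => (⟨y.1, Quotient.sound
      (rE_of_common hM (oo_symm hM y.2) (nb_oo hM x))⟩ : {x' : M // qk x' = qk x}))
    (fun a b h => by
      apply Subtype.ext
      exact congrArg (Subtype.val : {x' : M // qk x' = qk x} → M) h)

lemma Qc_infinite [Nonempty M] (hM : M ⊨ SAPP) : Infinite (Qc M) := by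
  rw [← not_finite_iff_infinite]
  intro hfin
  have hr : (Set.range (fun q : Qc M => nb hM q.out)).Finite := Set.finite_range _
  obtain ⟨s, hs⟩ := oo_avoid' hM hr.toFinset
  apply hs (nb hM (qk s).out) (by
    rw [Set.Finite.mem_toFinset]
    exact ⟨_, rfl⟩)
  have h1 : (sE M).r (qk s).out s := Quotient.exact (Quotient.out_eq (qk s))
  exact (h1 _).mp (nb_oo hM (qk s).out)

def orbS (hM : M ⊨ SAPP) : Setoid (Qc M) :=
  ⟨fun a b => b = a ∨ b = pI hM a, by
    refine ⟨fun a => Or.inl rfl, ?_, ?_⟩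
    · rintro a b (rfl | rfl)
      · exact Or.inl rfl
      · exact Or.inr (pI_invol hM a).symm
    · rintro a b c (rfl | rfl) (rfl | rfl)
      · exact Or.inl rfl
      · exact Or.inr rfl
      · exact Or.inr rfl
      · exact Or.inl (pI_invol hM a)⟩

abbrev Q2 (hM : M ⊨ SAPP) := Quotient (orbS hM)

def orb (hM : M ⊨ SAPP) (q : Qc M) : Q2 hM := Quotient.mk (orbS hM) q

lemma orb_p (hM : M ⊨ SAPP) (q : Qc M) : orb hM (pI hM q) = orb hM q :=
  Quotient.sound (Or.inr (pI_invol hM q).symm)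

lemma orb_out (hM : M ⊨ SAPP) (c : Q2 hM) : orb hM c.out = c := Quotient.out_eq c

lemma orb_dich (hM : M ⊨ SAPP) (q : Qc M) :
    q = (orb hM q).out ∨ q = pI hM ((orb hM q).out) :=
  Quotient.exact (Quotient.out_eq (orb hM q))

open Classical in
noncomputable def ebBool (hM : M ⊨ SAPP) (q : Qc M) : Bool :=
  if q = (orb hM q).out then true else false

open Classical in
lemma ebBool_true (hM : M ⊨ SAPP) {q : Qc M} (h : q = (orb hM q).out) :
    ebBool hM q = true := if_pos h

open Classical in
lemma ebBool_false (hM : M ⊨ SAPP) {q : Qc M} (h : q ≠ (orb hM q).out) :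
    ebBool hM q = false := if_neg h

lemma pI_out_ne_out (hM : M ⊨ SAPP) (c : Q2 hM) : pI hM c.out ≠ c.out :=
  pI_ne hM c.out

noncomputable def EB (hM : M ⊨ SAPP) : Qc M ≃ Bool × Q2 hM where
  toFun q := (ebBool hM q, orb hM q)
  invFun bc := bif bc.1 then bc.2.out else pI hM bc.2.out
  left_inv q := by
    by_cases h : q = (orb hM q).out
    · show (bif ebBool hM q then (orb hM q).out else pI hM (orb hM q).out) = q
      rw [ebBool_true hM h, cond_true]
      exact h.symm
    · show (bif ebBool hM q then (orb hM q).out else pI hM (orb hM q).out) = q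
      rw [ebBool_false hM h, cond_false]
      exact ((orb_dich hM q).resolve_left h).symm
  right_inv := by
    rintro ⟨b, c⟩
    cases b
    · show (ebBool hM (pI hM c.out), orb hM (pI hM c.out)) = (false, c)
      have horb : orb hM (pI hM c.out) = c := (orb_p hM c.out).trans (orb_out hM c)
      have hne : pI hM c.out ≠ (orb hM (pI hM c.out)).out := by
        rw [horb]
        exact pI_out_ne_out hM c
      rw [ebBool_false hM hne, horb]
    · show (ebBool hM c.out, orb hM c.out) = (true, c)
      have horb : orb hM c.out = c := orb_out hM c
      have heq : c.out = (orb hM c.out).out := by rw [horb]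
      rw [ebBool_true hM heq, horb]

lemma EB_p (hM : M ⊨ SAPP) (q : Qc M) :
    EB hM (pI hM q) = (!(EB hM q).1, (EB hM q).2) := by
  have horb : orb hM (pI hM q) = orb hM q := orb_p hM q
  show (ebBool hM (pI hM q), orb hM (pI hM q)) = (!(ebBool hM q), orb hM q)
  by_cases h : q = (orb hM q).out
  · have h1 : pI hM q ≠ (orb hM (pI hM q)).out := by
      rw [horb, ← h]
      exact pI_ne hM q
    rw [ebBool_false hM h1, ebBool_true hM h, horb]
    rfl
  · have h2 := (orb_dich hM q).resolve_left h
    have h1 : pI hM q = (orb hM (pI hM q)).out := by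
      rw [horb]
      conv_lhs => rw [h2]
      rw [pI_invol]
    rw [ebBool_true hM h1, ebBool_false hM h, horb]
    rfl

end Build

section Final

def KK : Type := (Bool × ℕ) × ℕ

instance : L.Structure KK where
  funMap := fun {n} f _ => isEmptyElim f
  RelMap := fun {n} r v =>
    match r with
    | .o => (v 0).1.2 = (v 1).1.2 ∧ (v 0).1.1 ≠ (v 1).1.1

lemma relMap_eq_oo {M : Type*} [L.Structure M] (v : Fin 2 → M) :
    RelMap (oSym : L.Relations 2) v ↔ oo (v 0) (v 1) := by
  have hv : ![v 0, v 1] = v := by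
    funext i
    fin_cases i <;> rfl
  rw [oo, hv]

theorem modelToK (M : Type*) [L.Structure M] [Nonempty M] [Countable M] (hM : M ⊨ SAPP) :
    Nonempty (M ≃[L] KK) := by
  classical
  have hQinf : Infinite (Qc M) := Qc_infinite hM
  have hQ2inf : Infinite (Q2 hM) := by
    rw [← not_finite_iff_infinite]
    intro hfin
    have : Finite (Qc M) := Finite.of_equiv _ (EB hM).symm
    exact absurd this (by rw [← not_infinite_iff_finite] at this ⊢; exact fun _ => this hQinf)
  obtain ⟨d2⟩ := nonempty_denumerable (Q2 hM)
  let i2 : Q2 hM ≃ ℕ := @Denumerable.eqv _ d2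
  have hfib : ∀ q : Qc M, Nonempty ({x : M // qk x = q} ≃ ℕ) := fun q => by
    have := fiber_infinite hM q
    obtain ⟨d⟩ := nonempty_denumerable {x : M // qk x = q}
    exact ⟨@Denumerable.eqv _ d⟩
  let g : ∀ q : Qc M, {x : M // qk x = q} ≃ ℕ := fun q => (hfib q).some
  let GQ : Qc M ≃ Bool × ℕ := (EB hM).trans (Equiv.prodCongr (Equiv.refl Bool) i2)
  have hGQ : ∀ q, GQ (pI hM q) = (!(GQ q).1, (GQ q).2) := by
    intro q
    show (Equiv.prodCongr (Equiv.refl Bool) i2) (EB hM (pI hM q)) = _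
    rw [EB_p hM q]
    rfl
  let F : M ≃ (Bool × ℕ) × ℕ :=
    (Equiv.sigmaFiberEquiv (qk : M → Qc M)).symm.trans
      ((Equiv.sigmaCongrRight g).trans
        ((Equiv.sigmaEquivProd (Qc M) ℕ).trans (Equiv.prodCongr GQ (Equiv.refl ℕ))))
  have hF1 : ∀ x : M, (F x).1 = GQ (qk x) := fun x => rfl
  have key : ∀ x y : M, oo x y ↔
      ((F x).1.2 = (F y).1.2 ∧ (F x).1.1 ≠ (F y).1.1) := by
    intro x y
    rw [hF1, hF1, oo_iff_p hM]
    constructor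
    · intro h
      have h2 := congrArg GQ h
      rw [hGQ] at h2
      have hfst := congrArg Prod.fst h2
      have hsnd := congrArg Prod.snd h2
      simp only at hfst hsnd
      refine ⟨hsnd, ?_⟩
      rw [← hfst]
      cases (GQ (qk x)).1 <;> simp
    · rintro ⟨h2, h1⟩
      apply GQ.injective
      rw [hGQ]
      apply Prod.ext
      · simp only
        cases hb : (GQ (qk x)).1 <;> cases hb' : (GQ (qk y)).1 <;> simp_all
      · exact h2
  refine ⟨⟨F, ?_, ?_⟩⟩
  · intro n f
    exact isEmptyElim f
  · intro n r v
    cases r with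
    | o =>
      rw [relMap_eq_oo v]
      show ((F (v 0)).1.2 = (F (v 1)).1.2 ∧ (F (v 0)).1.1 ≠ (F (v 1)).1.1) ↔ oo (v 0) (v 1)
      exact (key (v 0) (v 1)).symm


/-- SAPP is ω-categorical: any two countable models of SAPP are isomorphic. -/
theorem statement_17 (M N : Type*) [L.Structure M] [L.Structure N] [Nonempty M] [Nonempty N]
    [Countable M] [Countable N] (hM : M ⊨ SAPP) (hN : N ⊨ SAPP) :
    Nonempty (M ≃[L] N) := by
  obtain ⟨fM⟩ := modelToK M hM
  obtain ⟨fN⟩ := modelToK N hN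
  exact ⟨fN.symm.comp fM⟩
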